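/- For a standard normal random variable Z with tail function Φ̄(x) = P(Z ≥ x) and density φ(x) = e^{-x²/2}/√(2π), the inverse Mills ratio r(x) = φ(x)/Φ̄(x) is strictly increasing on ℝ. -/

import Mathlib

/-
Since φ' = -xφ and Φ̄' = -φ, the inverse Mills ratio satisfies r' = r (r - x), so it suffices to
show Mills' inequality x Φ̄(x) < φ(x). For x > 0 the weak form follows from
x Φ̄(x) = ∫_x^∞ x φ ≤ ∫_x^∞ u φ(u) du = φ(x). The strict form then comes from
g(x) = φ(x) - x Φ̄(x), which is strictly decreasing because g' = -Φ̄ < 0: hence g(x) > g(x + 1) ≥ 0.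
-/

open MeasureTheory Real Set

noncomputable def phi (x : ℝ) : ℝ := Real.exp (-x^2/2) / Real.sqrt (2*Real.pi)
noncomputable def Phibar (x : ℝ) : ℝ := ∫ u in Set.Ioi x, phi u
noncomputable def mills (x : ℝ) : ℝ := phi x / Phibar x

open Filter Topology

theorem hasDerivAt_integral_Ioi {E : Type*} [NormedAddCommGroup E] [NormedSpace ℝ E]
    [CompleteSpace E] {f : ℝ → E} (hf : Continuous f) (hfi : Integrable f) (x : ℝ) :
    HasDerivAt (fun y => ∫ u in Ioi y, f u) (-f x) x := by
  have htail : (fun y => ∫ u in Ioi y, f u) =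
      fun y => (∫ u in Ioi 0, f u) - ∫ u in (0 : ℝ)..y, f u :=
    funext fun y => by
      rw [← intervalIntegral.integral_Ioi_sub_Ioi' hfi.integrableOn hfi.integrableOn,
        sub_sub_cancel]
  rw [htail, ← zero_sub]
  exact (hasDerivAt_const x _).sub <| intervalIntegral.integral_hasDerivAt_right
    hfi.intervalIntegrable (hf.stronglyMeasurableAtFilter _ _) hf.continuousAt

lemma phi_pos (x : ℝ) : 0 < phi x := by
  unfold phi
  positivity

lemma continuous_phi : Continuous phi := by
  unfold phi
  fun_prop

lemma integrable_phi : Integrable phi := by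
  convert (integrable_exp_neg_mul_sq (by norm_num : (0 : ℝ) < 1 / 2)).div_const
    (√(2 * π)) using 2 with x
  unfold phi
  ring_nf

lemma hasDerivAt_phi (x : ℝ) : HasDerivAt phi (-x * phi x) x := by
  have h : HasDerivAt (fun y : ℝ => -y ^ 2 / 2) (-x) x :=
    ((hasDerivAt_pow 2 x).neg.div_const 2).congr_deriv <| by
      simp only [Nat.cast_ofNat, Nat.add_one_sub_one, pow_one]
      ring
  exact (h.exp.div_const (√(2 * π))).congr_deriv (by unfold phi; ring)

lemma tendsto_phi_atTop : Tendsto phi atTop (𝓝 0) := by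
  have h : Tendsto (fun x : ℝ => -x ^ 2 / 2) atTop atBot :=
    (tendsto_neg_atTop_atBot.comp (tendsto_pow_atTop two_ne_zero)).atBot_div_const two_pos
  rw [← zero_div (√(2 * π))]
  exact (tendsto_exp_atBot.comp h).div_const (√(2 * π))

lemma hasDerivAt_Phibar (x : ℝ) : HasDerivAt Phibar (-phi x) x :=
  hasDerivAt_integral_Ioi continuous_phi integrable_phi x

lemma Phibar_pos (x : ℝ) : 0 < Phibar x := by
  have hsupp : Function.support phi = univ := eq_univ_of_forall fun u => (phi_pos u).ne'
  rw [Phibar, setIntegral_pos_iff_support_of_nonneg_ae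
    (ae_of_all _ fun u => (phi_pos u).le) integrable_phi.integrableOn, hsupp, univ_inter]
  exact Measure.measure_Ioi_pos volume x

lemma mills_pos (x : ℝ) : 0 < mills x :=
  div_pos (phi_pos x) (Phibar_pos x)

lemma hasDerivAt_mills (x : ℝ) : HasDerivAt mills (mills x * (mills x - x)) x := by
  have hPhibar := (Phibar_pos x).ne'
  refine ((hasDerivAt_phi x).div (hasDerivAt_Phibar x) hPhibar).congr_deriv ?_
  simp only [mills]
  field_simp
  ring

lemma integrableOn_Ioi_mul_phi_and_integral_eq {x : ℝ} (hx : 0 ≤ x) :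
    IntegrableOn (fun u => u * phi u) (Ioi x) ∧ ∫ u in Ioi x, u * phi u = phi x := by
  have hderiv : ∀ u ∈ Ici x, HasDerivAt (fun u => -phi u) (u * phi u) u := fun u _ =>
    (hasDerivAt_phi u).neg.congr_deriv (by ring)
  have hnonneg : ∀ u ∈ Ioi x, 0 ≤ u * phi u := fun u hu =>
    mul_nonneg (hx.trans (le_of_lt hu)) (phi_pos u).le
  have hlim : Tendsto (fun u => -phi u) atTop (𝓝 0) := by
    simpa using tendsto_phi_atTop.neg
  refine ⟨integrableOn_Ioi_deriv_of_nonneg' hderiv hnonneg hlim, ?_⟩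
  rw [integral_Ioi_of_hasDerivAt_of_nonneg' hderiv hnonneg hlim, zero_sub, neg_neg]

lemma mul_Phibar_le_phi (x : ℝ) : x * Phibar x ≤ phi x := by
  rcases le_or_gt x 0 with hx | hx
  · exact (mul_nonpos_of_nonpos_of_nonneg hx (Phibar_pos x).le).trans (phi_pos x).le
  obtain ⟨hint, hval⟩ := integrableOn_Ioi_mul_phi_and_integral_eq hx.le
  calc x * Phibar x = ∫ u in Ioi x, x * phi u := (integral_const_mul x phi).symm
    _ ≤ ∫ u in Ioi x, u * phi u :=
        setIntegral_mono_on (integrable_phi.integrableOn.const_mul x) hint measurableSet_Ioi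
          fun u hu => mul_le_mul_of_nonneg_right (le_of_lt hu) (phi_pos u).le
    _ = phi x := hval

lemma mul_Phibar_lt_phi (x : ℝ) : x * Phibar x < phi x := by
  let g : ℝ → ℝ := fun y => phi y - y * Phibar y
  have hg_anti : StrictAnti g := strictAnti_of_hasDerivAt_neg
    (fun y => ((hasDerivAt_phi y).sub ((hasDerivAt_id y).mul (hasDerivAt_Phibar y))).congr_deriv
      (by simp only [id]; ring))
    (fun y => neg_lt_zero.2 (Phibar_pos y))
  have hlt : g (x + 1) < g x := hg_anti (lt_add_one x)
  have hnonneg : 0 ≤ g (x + 1) := sub_nonneg.2 (mul_Phibar_le_phi (x + 1))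
  simp only [g] at hlt hnonneg
  linarith

lemma lt_mills (x : ℝ) : x < mills x :=
  (lt_div_iff₀ (Phibar_pos x)).2 (mul_Phibar_lt_phi x)

theorem mills_strictMono : StrictMono mills :=
  strictMono_of_hasDerivAt_pos hasDerivAt_mills
    fun x => mul_pos (mills_pos x) (sub_pos.2 (lt_mills x))
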